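/- arXiv:2604.16071 — 4 statements merged into one kernel-verified Lean document; each statement's English description precedes it below -/
import Mathlib

section
/- Let (Ω, 𝓕, μ) be a probability space with a filtration 𝓕₀ ⊆ 𝓕₁ ⊆ … ⊆ 𝓕ₙ, and let I₁, …, Iₙ be {0,1}-valued random variables such that each Iᵢ is 𝓕ᵢ-measurable. Let p ∈ (0,1) and suppose that for every i ∈ {1,…,n} the conditional expectation satisfies E[Iᵢ ∣ 𝓕_{i-1}] ≤ p almost surely. Let S = Σ_{i=1}^n Iᵢ. Then for every integer τ with n·p < τ ≤ n, μ(S ≥ τ) ≤ exp(−n · D(τ/n ‖ p)). -/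
/-! Exponential moment method. As `Iᵢ ∈ {0, 1}`, `exp (l Iᵢ) = 1 + (eˡ - 1) Iᵢ`, so conditioning on
`𝓕_{i-1}` gives `E[exp (l Sᵢ)] ≤ (1 - p + p eˡ) E[exp (l S_{i-1})]`, hence
`E[exp (l S)] ≤ (1 - p + p eˡ)ⁿ` for `l ≥ 0`. Markov's inequality then bounds `μ(S ≥ τ)` by
`(e^{-l q} (1 - p + p eˡ))ⁿ` with `q = τ / n`. The infimum over `l > 0` of the base is
`exp (-D(q ‖ p))`: it is attained at `eˡ = q (1 - p) / ((1 - q) p)` when `q < 1`, and approached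
as `l → ∞` when `q = 1`. -/

open MeasureTheory Real

/-- Binary relative entropy `D(u ‖ v)`.  The convention `0 · ln 0 = 0` is automatic here,
since the problematic logarithm is multiplied by a factor that vanishes in that case. -/
noncomputable def klBin (u v : ℝ) : ℝ :=
  u * Real.log (u / v) + (1 - u) * Real.log ((1 - u) / (1 - v))

open ProbabilityTheory Filter Topology

section ConditionalBernoulli

variable {Ω : Type*} {m m0 : MeasurableSpace Ω} {μ : Measure Ω}

theorem integral_mul_le_of_condExp_le (hm : m ≤ m0) [SigmaFinite (μ.trim hm)]
    {F X : Ω → ℝ} {p : ℝ} (hF : StronglyMeasurable[m] F) (hF0 : 0 ≤ F)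
    (hFint : Integrable F μ) (hX : Integrable X μ) (hFX : Integrable (F * X) μ)
    (hcond : ∀ᵐ ω ∂μ, μ[X | m] ω ≤ p) :
    ∫ ω, F ω * X ω ∂μ ≤ p * ∫ ω, F ω ∂μ := by
  have hpull : ∀ᵐ ω ∂μ, μ[F * X | m] ω ≤ F ω * p := by
    filter_upwards [condExp_mul_of_stronglyMeasurable_left hF hFX hX, hcond] with ω hω hωp
    rw [hω]
    exact mul_le_mul_of_nonneg_left hωp (hF0 ω)
  calc ∫ ω, F ω * X ω ∂μ = ∫ ω, μ[F * X | m] ω ∂μ := (integral_condExp hm).symm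
    _ ≤ ∫ ω, F ω * p ∂μ := integral_mono_ae integrable_condExp (hFint.mul_const p) hpull
    _ = p * ∫ ω, F ω ∂μ := by rw [integral_mul_const, mul_comm]

theorem exp_mul_of_eq_zero_or_eq_one {x : ℝ} (hx : x = 0 ∨ x = 1) (l : ℝ) :
    exp (l * x) = 1 + (exp l - 1) * x := by
  rcases hx with rfl | rfl <;> simp

variable [IsFiniteMeasure μ]

theorem integral_mul_exp_le_of_condExp_le (hm : m ≤ m0) {F X : Ω → ℝ} {p l : ℝ}
    (hF : StronglyMeasurable[m] F) (hF0 : 0 ≤ F) (hFint : Integrable F μ)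
    (hX : AEStronglyMeasurable X μ) (hX01 : ∀ ω, X ω = 0 ∨ X ω = 1)
    (hcond : ∀ᵐ ω ∂μ, μ[X | m] ω ≤ p) (hl : 0 ≤ l) :
    ∫ ω, F ω * exp (l * X ω) ∂μ ≤ (1 - p + p * exp l) * ∫ ω, F ω ∂μ := by
  have hXbdd : ∀ ω, ‖X ω‖ ≤ 1 := fun ω ↦ by rcases hX01 ω with h | h <;> simp [h]
  have hXint : Integrable X μ := .of_bound hX 1 (ae_of_all _ hXbdd)
  have hFX : Integrable (F * X) μ :=
    (hFint.bdd_mul hX (ae_of_all _ hXbdd)).congr (ae_of_all _ fun ω ↦ mul_comm (X ω) (F ω))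
  have hexp : ∀ ω, F ω * exp (l * X ω) = F ω + (exp l - 1) * (F ω * X ω) := fun ω ↦ by
    rw [exp_mul_of_eq_zero_or_eq_one (hX01 ω)]; ring
  have hel : 0 ≤ exp l - 1 := by linarith [one_le_exp hl]
  have hFX' : Integrable (fun ω ↦ (exp l - 1) * (F ω * X ω)) μ := hFX.const_mul _
  simp_rw [hexp]
  rw [integral_add hFint hFX', integral_const_mul]
  nlinarith [integral_mul_le_of_condExp_le hm hF hF0 hFint hXint hFX hcond]

end ConditionalBernoulli

section AdaptiveMGF

variable {Ω : Type*} {m0 : MeasurableSpace Ω} {μ : Measure Ω} (𝓕 : Filtration ℕ m0)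
  (I : ℕ → Ω → ℝ) {n : ℕ}

theorem measurable_sum_Icc_of_measurable_filtration
    (hmeas : ∀ i ∈ Finset.Icc 1 n, Measurable[𝓕 i] (I i)) :
    Measurable[𝓕 n] fun ω ↦ ∑ i ∈ Finset.Icc 1 n, I i ω :=
  Finset.measurable_sum _ fun i hi ↦ (hmeas i hi).mono (𝓕.mono (Finset.mem_Icc.1 hi).2) le_rfl

theorem integrable_exp_mul_sum_Icc [IsFiniteMeasure μ]
    (hbin : ∀ i ∈ Finset.Icc 1 n, ∀ ω, I i ω = 0 ∨ I i ω = 1)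
    (hmeas : ∀ i ∈ Finset.Icc 1 n, Measurable[𝓕 i] (I i)) {l : ℝ} (hl : 0 ≤ l) :
    Integrable (fun ω ↦ exp (l * ∑ i ∈ Finset.Icc 1 n, I i ω)) μ := by
  have hS := (measurable_sum_Icc_of_measurable_filtration 𝓕 I hmeas).mono (𝓕.le n) le_rfl
  refine .of_bound (measurable_exp.comp (hS.const_mul l)).aestronglyMeasurable (exp (l * n))
    (ae_of_all _ fun ω ↦ ?_)
  rw [norm_of_nonneg (exp_pos _).le, exp_le_exp]
  gcongr
  calc ∑ i ∈ Finset.Icc 1 n, I i ω ≤ ∑ _i ∈ Finset.Icc 1 n, (1 : ℝ) :=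
        Finset.sum_le_sum fun i hi ↦ by rcases hbin i hi ω with h | h <;> simp [h]
    _ = n := by simp

theorem integral_exp_mul_sum_Icc_le [IsProbabilityMeasure μ]
    (hbin : ∀ i ∈ Finset.Icc 1 n, ∀ ω, I i ω = 0 ∨ I i ω = 1)
    (hmeas : ∀ i ∈ Finset.Icc 1 n, Measurable[𝓕 i] (I i)) {p l : ℝ} (hp : 0 ≤ p)
    (hcond : ∀ i ∈ Finset.Icc 1 n, ∀ᵐ ω ∂μ, μ[I i | 𝓕 (i - 1)] ω ≤ p) (hl : 0 ≤ l) :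
    ∫ ω, exp (l * ∑ i ∈ Finset.Icc 1 n, I i ω) ∂μ ≤ (1 - p + p * exp l) ^ n := by
  induction n with
  | zero => simp
  | succ n ih =>
    have hsub : Finset.Icc 1 n ⊆ Finset.Icc 1 (n + 1) := Finset.Icc_subset_Icc_right n.le_succ
    have hlast : n + 1 ∈ Finset.Icc 1 (n + 1) := by simp
    have hF := measurable_exp.comp
      ((measurable_sum_Icc_of_measurable_filtration 𝓕 I fun i hi ↦ hmeas i (hsub hi)).const_mul l)
    have hX := (hmeas _ hlast).mono (𝓕.le _) le_rfl
    have hc : 0 ≤ 1 - p + p * exp l := by nlinarith [one_le_exp hl]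
    simp_rw [Finset.sum_Icc_succ_top (by omega : 1 ≤ n + 1), mul_add, exp_add]
    calc ∫ ω, exp (l * ∑ i ∈ Finset.Icc 1 n, I i ω) * exp (l * I (n + 1) ω) ∂μ
        ≤ (1 - p + p * exp l) * ∫ ω, exp (l * ∑ i ∈ Finset.Icc 1 n, I i ω) ∂μ :=
          integral_mul_exp_le_of_condExp_le (𝓕.le n) hF.stronglyMeasurable
            (fun ω ↦ (exp_pos _).le)
            (integrable_exp_mul_sum_Icc 𝓕 I (fun i hi ↦ hbin i (hsub hi))
              (fun i hi ↦ hmeas i (hsub hi)) hl)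
            hX.aestronglyMeasurable (hbin _ hlast) (by simpa using hcond _ hlast) hl
      _ ≤ (1 - p + p * exp l) * (1 - p + p * exp l) ^ n := by
          gcongr
          exact ih (fun i hi ↦ hbin i (hsub hi)) (fun i hi ↦ hmeas i (hsub hi))
            (fun i hi ↦ hcond i (hsub hi))
      _ = (1 - p + p * exp l) ^ (n + 1) := (pow_succ' _ _).symm

end AdaptiveMGF

theorem measure_ge_le_ofReal_of_integral_exp_le {Ω : Type*} {m0 : MeasurableSpace Ω}
    {μ : Measure Ω} [IsFiniteMeasure μ] {X : Ω → ℝ} {t M : ℝ} (ε : ℝ) (ht : 0 ≤ t)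
    (hint : Integrable (fun ω ↦ exp (t * X ω)) μ) (hM : ∫ ω, exp (t * X ω) ∂μ ≤ M) :
    μ {ω | ε ≤ X ω} ≤ ENNReal.ofReal (exp (-t * ε) * M) := by
  rw [← ofReal_measureReal]
  exact ENNReal.ofReal_le_ofReal ((measure_ge_le_exp_mul_mgf ε ht hint).trans
    (mul_le_mul_of_nonneg_left hM (exp_pos _).le))

section ChernoffOptimization

variable {p q : ℝ}

theorem exists_exp_neg_mul_mul_eq_exp_neg_klBin (hp : p ∈ Set.Ioo 0 1) (hpq : p < q)
    (hq : q < 1) : ∃ l > 0, exp (-(l * q)) * (1 - p + p * exp l) = exp (-klBin q p) := by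
  obtain ⟨hp0, hp1⟩ := hp
  set a := q / p
  set b := (1 - q) / (1 - p)
  have ha : 1 < a := (one_lt_div hp0).2 hpq
  have hb0 : 0 < b := div_pos (by linarith) (by linarith)
  have hb : b < 1 := (div_lt_one (by linarith)).2 (by linarith)
  refine ⟨log a - log b, sub_pos.2 (log_lt_log hb0 (by linarith)), ?_⟩
  have hsum : 1 - p + p * (a / b) = exp (-log b) := by
    have : 1 - q ≠ 0 := by linarith
    have : 1 - p ≠ 0 := by linarith
    rw [exp_neg, exp_log hb0]
    simp only [a, b]
    field_simp
    ring
  have hkl : klBin q p = q * log a + (1 - q) * log b := rfl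
  rw [exp_sub, exp_log (by linarith), exp_log hb0, hsum, ← exp_add, hkl]
  ring_nf

theorem tendsto_exp_neg_mul_mul_atTop_exp_neg_klBin_one (hp : 0 < p) :
    Tendsto (fun l ↦ exp (-(l * 1)) * (1 - p + p * exp l)) atTop (𝓝 (exp (-klBin 1 p))) := by
  have hlim : exp (-klBin 1 p) = (1 - p) * 0 + p := by
    simp [klBin, log_inv, exp_log hp]
  rw [hlim]
  refine ((tendsto_exp_neg_atTop_nhds_zero.const_mul (1 - p)).add_const p).congr fun l ↦ ?_
  rw [mul_one, exp_neg]
  field_simp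

theorem exp_neg_klBin_mem_closure (hp : p ∈ Set.Ioo 0 1) (hpq : p < q) (hq : q ≤ 1) :
    exp (-klBin q p) ∈ closure ((fun l ↦ exp (-(l * q)) * (1 - p + p * exp l)) '' Set.Ioi 0) := by
  rcases hq.lt_or_eq with hq | rfl
  · obtain ⟨l, hl, h⟩ := exists_exp_neg_mul_mul_eq_exp_neg_klBin hp hpq hq
    exact subset_closure ⟨l, hl, h⟩
  · exact mem_closure_of_tendsto (tendsto_exp_neg_mul_mul_atTop_exp_neg_klBin_one hp.1)
      ((eventually_gt_atTop 0).mono fun l hl ↦ ⟨l, hl, rfl⟩)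

theorem le_ofReal_exp_neg_klBin_pow {x : ENNReal} (n : ℕ) (hp : p ∈ Set.Ioo 0 1) (hpq : p < q)
    (hq : q ≤ 1) (h : ∀ l > 0, x ≤ ENNReal.ofReal ((exp (-(l * q)) * (1 - p + p * exp l)) ^ n)) :
    x ≤ ENNReal.ofReal (exp (-klBin q p) ^ n) := by
  have hclosed : IsClosed {y : ℝ | x ≤ ENNReal.ofReal (y ^ n)} :=
    isClosed_le continuous_const (ENNReal.continuous_ofReal.comp (continuous_pow n))
  refine closure_minimal ?_ hclosed (exp_neg_klBin_mem_closure hp hpq hq)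
  rintro _ ⟨l, hl, rfl⟩
  exact h l hl

end ChernoffOptimization

/-- **Chernoff bound under adaptivity (upper tail).**  If `I₁, …, Iₙ` are `{0,1}`-valued,
`Iᵢ` is `𝓕ᵢ`-measurable, and `E[Iᵢ ∣ 𝓕_{i-1}] ≤ p` a.s. for all `i`, then for every
integer `τ` with `n·p < τ ≤ n`, `μ(S ≥ τ) ≤ exp(−n · D(τ/n ‖ p))` where `S = Σᵢ Iᵢ`. -/
theorem chernoff_adaptive_upper_tail
    {Ω : Type*} {m0 : MeasurableSpace Ω} {μ : Measure Ω} [IsProbabilityMeasure μ]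
    (n : ℕ) (𝓕 : Filtration ℕ m0) (I : ℕ → Ω → ℝ)
    (hbin : ∀ i ∈ Finset.Icc 1 n, ∀ ω, I i ω = 0 ∨ I i ω = 1)
    (hmeas : ∀ i ∈ Finset.Icc 1 n, Measurable[𝓕 i] (I i))
    (p : ℝ) (hp : p ∈ Set.Ioo (0 : ℝ) 1)
    (hcond : ∀ i ∈ Finset.Icc 1 n, ∀ᵐ ω ∂μ, (μ[I i | 𝓕 (i - 1)]) ω ≤ p)
    (τ : ℤ) (hτ1 : (n : ℝ) * p < τ) (hτ2 : (τ : ℝ) ≤ n) :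
    μ {ω | (τ : ℝ) ≤ ∑ i ∈ Finset.Icc 1 n, I i ω}
      ≤ ENNReal.ofReal (Real.exp (-(n : ℝ) * klBin ((τ : ℝ) / n) p)) := by
  have hn : (0 : ℝ) < n := by nlinarith [hp.2]
  have hpq : p < τ / n := (lt_div_iff₀ hn).2 (by linarith)
  rw [neg_mul, ← mul_neg, exp_nat_mul]
  refine le_ofReal_exp_neg_klBin_pow n hp hpq (div_le_one_of_le₀ hτ2 hn.le) fun l hl ↦ ?_
  convert measure_ge_le_ofReal_of_integral_exp_le (τ : ℝ) hl.le
    (integrable_exp_mul_sum_Icc 𝓕 I hbin hmeas hl.le)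
    (integral_exp_mul_sum_Icc_le 𝓕 I hbin hmeas hp.1.le hcond hl.le) using 2
  rw [mul_pow, ← exp_nat_mul]
  congr 2
  field_simp
end

section
/- Let (Ω, 𝓕, μ) be a probability space with a filtration 𝓕₀ ⊆ 𝓕₁ ⊆ … ⊆ 𝓕ₙ, and let I₁, …, Iₙ be {0,1}-valued random variables such that each Iᵢ is 𝓕ᵢ-measurable. Let p ∈ (0,1) and suppose that for every i ∈ {1,…,n} the conditional expectation satisfies E[Iᵢ ∣ 𝓕_{i-1}] ≥ p almost surely. Let S = Σ_{i=1}^n Iᵢ. Then for every integer τ with 0 < τ < n·p, μ(S ≤ τ) ≤ exp(−n · D(τ/n ‖ p)). -/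
/-!
For `t ≤ 0` and `{0,1}`-valued `Iᵢ`, `exp (t * S) = ∏ᵢ (1 - (1 - eᵗ) Iᵢ)`. Conditioning on
`𝓕_{k}` before multiplying in the factor of `I_{k+1}` shows that each factor costs at most
`1 - (1 - eᵗ) p`, the moment generating function of a Bernoulli(`p`) variable, so
`E[exp (t * S)] ≤ (1 - (1 - eᵗ) p)ⁿ` exactly as for independent Bernoulli(`p`) variables.
The Chernoff bound `μ(S ≤ τ) ≤ e^{-tτ} E[exp (t * S)]` at the optimal `eᵗ = x(1-p)/((1-x)p)`,
`x = τ/n`, equals `exp (-n D(x ‖ p))`.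
-/

open MeasureTheory Real

open Finset ProbabilityTheory

lemma prod_one_sub_mul_mem_Icc {ι : Type*} {s : Finset ι} {a : ι → ℝ} {c : ℝ}
    (hc : c ∈ Set.Icc (0 : ℝ) 1) (ha : ∀ i ∈ s, a i ∈ Set.Icc (0 : ℝ) 1) :
    ∏ i ∈ s, (1 - c * a i) ∈ Set.Icc (0 : ℝ) 1 := by
  have hfac : ∀ i ∈ s, 0 ≤ 1 - c * a i ∧ 1 - c * a i ≤ 1 := fun i hi => by
    obtain ⟨ha0, ha1⟩ := ha i hi
    constructor <;> nlinarith [hc.1, hc.2]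
  exact ⟨prod_nonneg fun i hi => (hfac i hi).1, prod_le_one (fun i hi => (hfac i hi).1)
    fun i hi => (hfac i hi).2⟩

lemma exp_mul_sum_eq_prod_one_sub_mul {ι : Type*} {s : Finset ι} {a : ι → ℝ}
    (ha : ∀ i ∈ s, a i = 0 ∨ a i = 1) (t : ℝ) :
    exp (t * ∑ i ∈ s, a i) = ∏ i ∈ s, (1 - (1 - exp t) * a i) := by
  rw [mul_sum, exp_sum]
  refine prod_congr rfl fun i hi => ?_
  rcases ha i hi with h | h <;> simp [h]

section

variable {Ω : Type*} {m m0 : MeasurableSpace Ω} {μ : Measure Ω}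

lemma mul_integral_le_integral_mul_of_le_condExp [IsFiniteMeasure μ] (hm : m ≤ m0)
    {Z Y : Ω → ℝ} {p C : ℝ} (hZ : StronglyMeasurable[m] Z) (hZ0 : ∀ ω, 0 ≤ Z ω)
    (hZC : ∀ ω, Z ω ≤ C) (hY : Integrable Y μ) (hp : ∀ᵐ ω ∂μ, p ≤ μ[Y | m] ω) :
    p * ∫ ω, Z ω ∂μ ≤ ∫ ω, Z ω * Y ω ∂μ := by
  have hZ_bound : ∀ᵐ ω ∂μ, ‖Z ω‖ ≤ C := .of_forall fun ω => by
    rw [Real.norm_of_nonneg (hZ0 ω)]; exact hZC ω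
  have hZ_int : Integrable Z μ := .of_bound (hZ.mono hm).aestronglyMeasurable C hZ_bound
  have hZY_int : Integrable (Z * Y) μ :=
    hY.bdd_mul (hZ.mono hm).aestronglyMeasurable hZ_bound
  calc p * ∫ ω, Z ω ∂μ = ∫ ω, Z ω * p ∂μ := by
        rw [← integral_const_mul]; simp_rw [mul_comm p]
    _ ≤ ∫ ω, Z ω * μ[Y | m] ω ∂μ := by
        refine integral_mono_ae (hZ_int.mul_const p)
          (integrable_condExp.bdd_mul (hZ.mono hm).aestronglyMeasurable hZ_bound) ?_
        filter_upwards [hp] with ω hω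
        exact mul_le_mul_of_nonneg_left hω (hZ0 ω)
    _ = ∫ ω, μ[Z * Y | m] ω ∂μ :=
        integral_congr_ae (condExp_mul_of_stronglyMeasurable_left hZ hZY_int hY).symm
    _ = ∫ ω, Z ω * Y ω ∂μ := integral_condExp hm

lemma integrable_prod_one_sub_mul [IsFiniteMeasure μ] {ι : Type*} {s : Finset ι}
    {X : ι → Ω → ℝ} {c : ℝ} (hc : c ∈ Set.Icc (0 : ℝ) 1) (hX : ∀ i ∈ s, Measurable (X i))
    (hX01 : ∀ i ∈ s, ∀ ω, X i ω ∈ Set.Icc (0 : ℝ) 1) :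
    Integrable (fun ω => ∏ i ∈ s, (1 - c * X i ω)) μ := by
  refine .of_bound (Finset.measurable_prod s fun i hi => ?_).aestronglyMeasurable 1
    (.of_forall fun ω => ?_)
  · exact measurable_const.sub ((hX i hi).const_mul c)
  · obtain ⟨h0, h1⟩ := prod_one_sub_mul_mem_Icc hc fun i hi => hX01 i hi ω
    rwa [Real.norm_of_nonneg h0]

theorem integral_prod_one_sub_mul_le_pow [IsProbabilityMeasure μ] (𝓕 : Filtration ℕ m0)
    {I : ℕ → Ω → ℝ} {c p : ℝ} (hc : c ∈ Set.Icc (0 : ℝ) 1) (hp : p ≤ 1) (n : ℕ)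
    (hI : ∀ i ∈ Icc 1 n, ∀ ω, I i ω ∈ Set.Icc (0 : ℝ) 1)
    (hmeas : ∀ i ∈ Icc 1 n, Measurable[𝓕 i] (I i))
    (hcond : ∀ i ∈ Icc 1 n, ∀ᵐ ω ∂μ, p ≤ μ[I i | 𝓕 (i - 1)] ω) :
    ∫ ω, ∏ i ∈ Icc 1 n, (1 - c * I i ω) ∂μ ≤ (1 - c * p) ^ n := by
  induction n with
  | zero => simp
  | succ k ih =>
    have hsub : Icc 1 k ⊆ Icc 1 (k + 1) := Icc_subset_Icc_right k.le_succ
    have hk : k + 1 ∈ Icc 1 (k + 1) := right_mem_Icc.2 (Nat.le_add_left 1 k)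
    set M : Ω → ℝ := fun ω => ∏ i ∈ Icc 1 k, (1 - c * I i ω)
    have hM_meas : Measurable[𝓕 k] M := Finset.measurable_prod _ fun i hi =>
      (((hmeas i (hsub hi)).mono (𝓕.mono (mem_Icc.1 hi).2) le_rfl).const_mul c).const_sub 1
    have hM01 : ∀ ω, M ω ∈ Set.Icc (0 : ℝ) 1 := fun ω =>
      prod_one_sub_mul_mem_Icc hc fun i hi => hI i (hsub hi) ω
    have hM_int : Integrable M μ := integrable_prod_one_sub_mul hc
      (fun i hi => (hmeas i (hsub hi)).mono (𝓕.le i) le_rfl) fun i hi => hI i (hsub hi)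
    have hI_meas : Measurable (I (k + 1)) := (hmeas (k + 1) hk).mono (𝓕.le _) le_rfl
    have hI_int : Integrable (I (k + 1)) μ := .of_bound hI_meas.aestronglyMeasurable 1
      (.of_forall fun ω => by
        obtain ⟨h0, h1⟩ := hI (k + 1) hk ω; rwa [Real.norm_of_nonneg h0])
    have hMI_int : Integrable (fun ω => M ω * I (k + 1) ω) μ :=
      hI_int.bdd_mul (hM_meas.mono (𝓕.le k) le_rfl).aestronglyMeasurable
        (.of_forall fun ω => by rw [Real.norm_of_nonneg (hM01 ω).1]; exact (hM01 ω).2)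
    have hstep : p * ∫ ω, M ω ∂μ ≤ ∫ ω, M ω * I (k + 1) ω ∂μ :=
      mul_integral_le_integral_mul_of_le_condExp (𝓕.le k) hM_meas.stronglyMeasurable
        (fun ω => (hM01 ω).1) (fun ω => (hM01 ω).2) hI_int (by simpa using hcond (k + 1) hk)
    have hM_le := ih (fun i hi => hI i (hsub hi)) (fun i hi => hmeas i (hsub hi))
      fun i hi => hcond i (hsub hi)
    calc ∫ ω, ∏ i ∈ Icc 1 (k + 1), (1 - c * I i ω) ∂μ
        = ∫ ω, M ω ∂μ - c * ∫ ω, M ω * I (k + 1) ω ∂μ := by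
          have hsplit : ∀ ω, ∏ i ∈ Icc 1 (k + 1), (1 - c * I i ω)
              = M ω - c * (M ω * I (k + 1) ω) := fun ω => by
            rw [prod_Icc_succ_top (Nat.le_add_left 1 k)]; ring
          simp_rw [hsplit]
          rw [integral_sub hM_int (hMI_int.const_mul c), integral_const_mul]
      _ ≤ (1 - c * p) * ∫ ω, M ω ∂μ := by nlinarith [hc.1]
      _ ≤ (1 - c * p) * (1 - c * p) ^ k :=
          mul_le_mul_of_nonneg_left hM_le (by nlinarith [hc.1, hc.2])
      _ = (1 - c * p) ^ (k + 1) := (pow_succ' _ _).symm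

theorem measureReal_sum_le_le_of_condExp_ge [IsProbabilityMeasure μ] (𝓕 : Filtration ℕ m0)
    {I : ℕ → Ω → ℝ} {p : ℝ} (hp : p ≤ 1) (n : ℕ)
    (hbin : ∀ i ∈ Icc 1 n, ∀ ω, I i ω = 0 ∨ I i ω = 1)
    (hmeas : ∀ i ∈ Icc 1 n, Measurable[𝓕 i] (I i))
    (hcond : ∀ i ∈ Icc 1 n, ∀ᵐ ω ∂μ, p ≤ μ[I i | 𝓕 (i - 1)] ω) {t : ℝ} (ht : t ≤ 0) (a : ℝ) :
    μ.real {ω | ∑ i ∈ Icc 1 n, I i ω ≤ a} ≤ exp (-t * a) * (1 - (1 - exp t) * p) ^ n := by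
  have hc : 1 - exp t ∈ Set.Icc (0 : ℝ) 1 :=
    ⟨sub_nonneg.2 (exp_le_one_iff.2 ht), by linarith [exp_pos t]⟩
  have hI01 : ∀ i ∈ Icc 1 n, ∀ ω, I i ω ∈ Set.Icc (0 : ℝ) 1 := fun i hi ω => by
    rcases hbin i hi ω with h | h <;> simp [h]
  have hexp : (fun ω => exp (t * ∑ i ∈ Icc 1 n, I i ω))
      = fun ω => ∏ i ∈ Icc 1 n, (1 - (1 - exp t) * I i ω) :=
    funext fun ω => exp_mul_sum_eq_prod_one_sub_mul (fun i hi => hbin i hi ω) t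
  have hint : Integrable (fun ω => exp (t * ∑ i ∈ Icc 1 n, I i ω)) μ := by
    rw [hexp]
    exact integrable_prod_one_sub_mul hc (fun i hi => (hmeas i hi).mono (𝓕.le i) le_rfl) hI01
  calc μ.real {ω | ∑ i ∈ Icc 1 n, I i ω ≤ a}
      ≤ exp (-t * a) * mgf (fun ω => ∑ i ∈ Icc 1 n, I i ω) μ t :=
        measure_le_le_exp_mul_mgf a ht hint
    _ ≤ exp (-t * a) * (1 - (1 - exp t) * p) ^ n := by
        gcongr
        rw [mgf, hexp]
        exact integral_prod_one_sub_mul_le_pow 𝓕 hc hp n hI01 hmeas hcond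

end

lemma klBin_eq_mul_sub_log {x p t : ℝ} (hx0 : 0 < x) (hx1 : x < 1) (hp0 : 0 < p) (hp1 : p < 1)
    (ht : exp t = x * (1 - p) / ((1 - x) * p)) :
    klBin x p = t * x - log (1 - (1 - exp t) * p) := by
  have h1x : 0 < 1 - x := sub_pos.2 hx1
  have h1p : 0 < 1 - p := sub_pos.2 hp1
  have hq : 1 - (1 - exp t) * p = (1 - p) / (1 - x) := by
    rw [ht]; field_simp; ring
  have hlog_t : t = log x + log (1 - p) - log (1 - x) - log p := by
    rw [← log_exp t, ht, log_div (by positivity) (by positivity), log_mul hx0.ne' h1p.ne',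
      log_mul h1x.ne' hp0.ne']
    ring
  rw [klBin, hq, hlog_t, log_div hx0.ne' hp0.ne', log_div h1x.ne' h1p.ne',
    log_div h1p.ne' h1x.ne']
  ring

/-- **Chernoff bound under adaptivity (lower tail).**  If `I₁, …, Iₙ` are `{0,1}`-valued,
`Iᵢ` is `𝓕ᵢ`-measurable, and `E[Iᵢ ∣ 𝓕_{i-1}] ≥ p` a.s. for all `i`, then for every
integer `τ` with `0 < τ < n·p`, `μ(S ≤ τ) ≤ exp(−n · D(τ/n ‖ p))` where `S = Σᵢ Iᵢ`. -/
theorem chernoff_adaptive_lower_tail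
    {Ω : Type*} {m0 : MeasurableSpace Ω} {μ : Measure Ω} [IsProbabilityMeasure μ]
    (n : ℕ) (𝓕 : Filtration ℕ m0) (I : ℕ → Ω → ℝ)
    (hbin : ∀ i ∈ Finset.Icc 1 n, ∀ ω, I i ω = 0 ∨ I i ω = 1)
    (hmeas : ∀ i ∈ Finset.Icc 1 n, Measurable[𝓕 i] (I i))
    (p : ℝ) (hp : p ∈ Set.Ioo (0 : ℝ) 1)
    (hcond : ∀ i ∈ Finset.Icc 1 n, ∀ᵐ ω ∂μ, p ≤ (μ[I i | 𝓕 (i - 1)]) ω)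
    (τ : ℤ) (hτ1 : 0 < τ) (hτ2 : (τ : ℝ) < (n : ℝ) * p) :
    μ {ω | ∑ i ∈ Finset.Icc 1 n, I i ω ≤ (τ : ℝ)}
      ≤ ENNReal.ofReal (Real.exp (-(n : ℝ) * klBin ((τ : ℝ) / n) p)) := by
  obtain ⟨hp0, hp1⟩ := hp
  have hτ0 : (0 : ℝ) < τ := Int.cast_pos.2 hτ1
  have hn : (0 : ℝ) < n := pos_of_mul_pos_left (hτ0.trans hτ2) hp0.le
  set x := (τ : ℝ) / n with hx
  have hx0 : 0 < x := div_pos hτ0 hn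
  have hxp : x < p := (div_lt_iff₀' hn).2 hτ2
  have hx1 : x < 1 := hxp.trans hp1
  -- the tilt minimising `exp (-t * τ) * (1 - (1 - exp t) * p) ^ n`
  set t := log (x * (1 - p) / ((1 - x) * p))
  have hr : 0 < x * (1 - p) / ((1 - x) * p) := by
    have := sub_pos.2 hx1; have := sub_pos.2 hp1; positivity
  have ht : exp t = x * (1 - p) / ((1 - x) * p) := exp_log hr
  have ht0 : t ≤ 0 := log_nonpos hr.le <| (div_le_one (by nlinarith)).2 (by nlinarith)
  have hq : 0 < 1 - (1 - exp t) * p := by nlinarith [exp_pos t]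
  calc μ {ω | ∑ i ∈ Icc 1 n, I i ω ≤ (τ : ℝ)}
      = ENNReal.ofReal (μ.real {ω | ∑ i ∈ Icc 1 n, I i ω ≤ (τ : ℝ)}) :=
        (ofReal_measureReal).symm
    _ ≤ ENNReal.ofReal (exp (-t * τ) * (1 - (1 - exp t) * p) ^ n) :=
        ENNReal.ofReal_le_ofReal <|
          measureReal_sum_le_le_of_condExp_ge 𝓕 hp1.le n hbin hmeas hcond ht0 τ
    _ = ENNReal.ofReal (exp (-n * klBin x p)) := by
        have hpow : (1 - (1 - exp t) * p) ^ n = exp (n * log (1 - (1 - exp t) * p)) := by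
          rw [exp_nat_mul, exp_log hq]
        rw [klBin_eq_mul_sub_log hx0 hx1 hp0 hp1 ht, hpow, ← exp_add, hx]
        field_simp
        ring_nf
end

section
/- Let n ≥ 1, let p ∈ (0,1), and let S be a binomial random variable with parameters n and p (i.e. S is distributed as PMF.binomial p n, the sum of n i.i.d. Bernoulli(p) indicators). Then for every integer τ with n·p < τ ≤ n, the probability that S ≥ τ is at most exp(−n · D(τ/n ‖ p)). -/
/-!
Change of measure. For `q = τ/n ≥ p` the likelihood ratio
`Bin(n,p){k} / Bin(n,q){k} = (p/q)^k ((1-p)/(1-q))^(n-k)` is non-increasing in `k`, so on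
`{k ≥ τ}` it is at most its value at `k = τ`, which is `exp(-n D(q ‖ p))`; summing against
`Bin(n,q)`, whose total mass is `1`, gives the bound. Ratios are kept cross-multiplied, so that
`q = 1` causes no division by zero.
-/

open MeasureTheory Real

set_option linter.deprecated false

open Finset

lemma pow_mul_one_sub_pow_mul_le {p q : ℝ} (hp : 0 ≤ p) (hpq : p ≤ q) (hq : q ≤ 1)
    {t k n : ℕ} (htk : t ≤ k) (hkn : k ≤ n) :
    p ^ k * (1 - p) ^ (n - k) * (q ^ t * (1 - q) ^ (n - t))
      ≤ q ^ k * (1 - q) ^ (n - k) * (p ^ t * (1 - p) ^ (n - t)) := by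
  obtain ⟨j, rfl⟩ := Nat.exists_eq_add_of_le htk
  rw [show n - t = n - (t + j) + j by omega]
  have : 0 ≤ 1 - p := by linarith
  have : 0 ≤ 1 - q := by linarith
  have hcross : (p * (1 - q)) ^ j ≤ (q * (1 - p)) ^ j :=
    pow_le_pow_left₀ (by positivity) (by nlinarith) j
  have hrest : 0 ≤ p ^ t * q ^ t * (1 - p) ^ (n - (t + j)) * (1 - q) ^ (n - (t + j)) := by
    have : 0 ≤ q := hp.trans hpq
    positivity
  calc p ^ (t + j) * (1 - p) ^ (n - (t + j)) * (q ^ t * (1 - q) ^ (n - (t + j) + j))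
      = (p * (1 - q)) ^ j * (p ^ t * q ^ t * (1 - p) ^ (n - (t + j)) * (1 - q) ^ (n - (t + j))) :=
        by rw [mul_pow]; ring
    _ ≤ (q * (1 - p)) ^ j * (p ^ t * q ^ t * (1 - p) ^ (n - (t + j)) * (1 - q) ^ (n - (t + j))) :=
        mul_le_mul_of_nonneg_right hcross hrest
    _ = _ := by rw [mul_pow]; ring

lemma binomial_tail_mul_le {p q : ℝ} (hp : 0 ≤ p) (hpq : p ≤ q) (hq : q ≤ 1) {t n : ℕ} :
    (∑ k ∈ range (n + 1) with t ≤ k, p ^ k * (1 - p) ^ (n - k) * n.choose k)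
        * (q ^ t * (1 - q) ^ (n - t)) ≤ p ^ t * (1 - p) ^ (n - t) := by
  have : 0 ≤ q := hp.trans hpq
  have : 0 ≤ 1 - q := by linarith
  have : 0 ≤ 1 - p := by linarith
  calc (∑ k ∈ range (n + 1) with t ≤ k, p ^ k * (1 - p) ^ (n - k) * n.choose k)
        * (q ^ t * (1 - q) ^ (n - t))
      = ∑ k ∈ range (n + 1) with t ≤ k,
          p ^ k * (1 - p) ^ (n - k) * (q ^ t * (1 - q) ^ (n - t)) * n.choose k := by
        rw [sum_mul]; exact sum_congr rfl fun _ _ ↦ by ring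
    _ ≤ ∑ k ∈ range (n + 1) with t ≤ k,
          q ^ k * (1 - q) ^ (n - k) * (p ^ t * (1 - p) ^ (n - t)) * n.choose k := by
        gcongr ∑ _ ∈ _, ?_ * _ with k hk
        obtain ⟨hk, htk⟩ := mem_filter.mp hk
        exact pow_mul_one_sub_pow_mul_le hp hpq hq htk (Nat.lt_succ_iff.mp (mem_range.mp hk))
    _ = (∑ k ∈ range (n + 1) with t ≤ k, q ^ k * (1 - q) ^ (n - k) * n.choose k)
          * (p ^ t * (1 - p) ^ (n - t)) := by
        rw [sum_mul]; exact sum_congr rfl fun _ _ ↦ by ring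
    _ ≤ (∑ k ∈ range (n + 1), q ^ k * (1 - q) ^ (n - k) * n.choose k)
          * (p ^ t * (1 - p) ^ (n - t)) := by
        gcongr
        exact filter_subset _ _
    _ = p ^ t * (1 - p) ^ (n - t) := by
        rw [← add_pow, add_sub_cancel, one_pow, one_mul]

lemma pow_mul_exp_neg_mul_log_div {a b : ℝ} (ha : 0 < a) (hb : 0 < b) (m : ℕ) :
    a ^ m * exp (-(m * log (a / b))) = b ^ m := by
  rw [← mul_neg, ← log_inv, inv_div, ← log_pow, exp_log (by positivity), div_pow,
    mul_div_cancel₀ _ (by positivity)]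

lemma pow_mul_one_sub_pow_mul_exp_neg_klBin {p : ℝ} (hp0 : 0 < p) (hp1 : p < 1) {t n : ℕ}
    (ht : 0 < t) (htn : t ≤ n) :
    (t / n : ℝ) ^ t * (1 - t / n) ^ (n - t) * exp (-n * klBin (t / n) p)
      = p ^ t * (1 - p) ^ (n - t) := by
  obtain ⟨m, rfl⟩ := Nat.exists_eq_add_of_le htn
  have hn : (0 : ℝ) < ↑(t + m) := by positivity
  have hq : (t / ↑(t + m) : ℝ) = t / (t + m) := by push_cast; rfl
  have h1q : 1 - (t / ↑(t + m) : ℝ) = m / (t + m) := by field_simp; push_cast; ring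
  have hsplit : -↑(t + m) * klBin (t / ↑(t + m)) p
      = -(t * log ((t / (t + m)) / p)) + -(m * log ((m / (t + m)) / (1 - p))) := by
    rw [klBin, h1q, hq]; field_simp; push_cast; ring
  rw [hsplit, exp_add, h1q, hq, Nat.add_sub_cancel_left]
  calc (t / (t + m) : ℝ) ^ t * (m / (t + m)) ^ m
        * (exp (-(t * log (t / (t + m) / p))) * exp (-(m * log (m / (t + m) / (1 - p)))))
      = ((t / (t + m) : ℝ) ^ t * exp (-(t * log (t / (t + m) / p))))
        * ((m / (t + m)) ^ m * exp (-(m * log (m / (t + m) / (1 - p))))) := by ring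
    _ = p ^ t * (1 - p) ^ m := by
      rw [pow_mul_exp_neg_mul_log_div (by positivity) hp0]
      rcases m.eq_zero_or_pos with rfl | hm
      · simp
      · rw [pow_mul_exp_neg_mul_log_div (by positivity) (by linarith)]

lemma PMF.binomial_toNNReal_apply {p : ℝ} (hp : 0 ≤ p) (h : p.toNNReal ≤ 1) (n : ℕ)
    (k : Fin (n + 1)) :
    PMF.binomial p.toNNReal h n k
      = ENNReal.ofReal (p ^ (k : ℕ) * (1 - p) ^ (n - k) * n.choose k) := by
  have hp1 : 0 ≤ 1 - p := sub_nonneg.mpr (Real.toNNReal_le_one.mp h)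
  rw [PMF.binomial_apply, Fin.val_last, ENNReal.ofReal_mul (by positivity),
    ENNReal.ofReal_mul (by positivity), ENNReal.ofReal_pow hp, ENNReal.ofReal_pow hp1,
    ENNReal.ofReal_sub _ hp, ENNReal.ofReal_one, ENNReal.ofReal_natCast]
  rfl

lemma PMF.binomial_toNNReal_toMeasure_setOf {p : ℝ} (hp : 0 ≤ p) (h : p.toNNReal ≤ 1)
    (n : ℕ) (P : ℕ → Prop) [DecidablePred P] :
    (PMF.binomial p.toNNReal h n).toMeasure {k | P k}
      = ENNReal.ofReal
          (∑ k ∈ range (n + 1) with P k, p ^ k * (1 - p) ^ (n - k) * n.choose k) := by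
  have hp1 : p ≤ 1 := Real.toNNReal_le_one.mp h
  rw [PMF.toMeasure_apply_fintype, sum_filter, ENNReal.ofReal_sum_of_nonneg]
  · rw [← Fin.sum_univ_eq_sum_range
      (fun k ↦ ENNReal.ofReal (if P k then p ^ k * (1 - p) ^ (n - k) * n.choose k else 0))]
    refine sum_congr rfl fun k _ ↦ ?_
    simp only [Set.indicator_apply, Set.mem_setOf_eq, binomial_toNNReal_apply hp]
    split_ifs <;> simp
  · intro k _
    have : 0 ≤ 1 - p := by linarith
    split_ifs <;> positivity

lemma binomial_tail_le_exp_neg_klBin {p : ℝ} (hp0 : 0 < p) (hp1 : p < 1) {t n : ℕ}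
    (ht : 0 < t) (htn : t ≤ n) (hpt : n * p ≤ t) :
    ∑ k ∈ range (n + 1) with t ≤ k, p ^ k * (1 - p) ^ (n - k) * n.choose k
      ≤ exp (-n * klBin (t / n) p) := by
  have hn : (0 : ℝ) < n := by exact_mod_cast ht.trans_le htn
  have hq1 : (t / n : ℝ) ≤ 1 := div_le_one_of_le₀ (by exact_mod_cast htn) hn.le
  have hpq : p ≤ t / n := by rwa [le_div_iff₀ hn, mul_comm]
  have hid := pow_mul_one_sub_pow_mul_exp_neg_klBin hp0 hp1 ht htn
  have hc : 0 < (t / n : ℝ) ^ t * (1 - t / n) ^ (n - t) := by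
    have : 0 < 1 - p := by linarith
    exact pos_of_mul_pos_left (hid.symm ▸ by positivity) (exp_pos (-n * klBin (t / n) p)).le
  refine le_of_mul_le_mul_right ?_ hc
  rw [mul_comm (exp _), hid]
  exact binomial_tail_mul_le hp0.le hpq hq1

theorem binomial_upper_tail_general
    (n : ℕ) (p : ℝ) (hp : p ∈ Set.Ioo (0 : ℝ) 1)
    (hp1 : ENNReal.ofReal p ≤ 1)
    (τ : ℤ) (hτ1 : (n : ℝ) * p < τ) (hτ2 : (τ : ℝ) ≤ n) :
    (PMF.binomial (Real.toNNReal p) (ENNReal.coe_le_one_iff.mp hp1) n).toMeasure {k : Fin (n + 1) | τ ≤ ((k : ℕ) : ℤ)}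
      ≤ ENNReal.ofReal (Real.exp (-(n : ℝ) * klBin ((τ : ℝ) / n) p)) := by
  obtain ⟨hp0, hp_lt_one⟩ := hp
  have hτ0 : 0 < τ := by
    have : (0 : ℝ) ≤ n * p := by positivity
    exact_mod_cast this.trans_lt hτ1
  lift τ to ℕ using hτ0.le with t
  simp only [Int.cast_natCast, Nat.cast_le] at hτ1 hτ2 ⊢
  rw [PMF.binomial_toNNReal_toMeasure_setOf hp0.le]
  exact ENNReal.ofReal_le_ofReal <| binomial_tail_le_exp_neg_klBin hp0 hp_lt_one
    (by exact_mod_cast hτ0) (by exact_mod_cast hτ2) hτ1.le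

/-- **Binomial upper-tail Chernoff bound.**  If `S ∼ Bin(n, p)` (i.e. `S` is distributed as
`PMF.binomial p n`), then for every integer `τ` with `n·p < τ ≤ n`,
`Pr[S ≥ τ] ≤ exp(−n · D(τ/n ‖ p))`. -/
theorem binomial_upper_tail
    (n : ℕ) (hn : 1 ≤ n) (p : ℝ) (hp : p ∈ Set.Ioo (0 : ℝ) 1)
    (hp1 : ENNReal.ofReal p ≤ 1)
    (τ : ℤ) (hτ1 : (n : ℝ) * p < τ) (hτ2 : (τ : ℝ) ≤ n) :
    (PMF.binomial (Real.toNNReal p) (ENNReal.coe_le_one_iff.mp hp1) n).toMeasure {k : Fin (n + 1) | τ ≤ ((k : ℕ) : ℤ)}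
      ≤ ENNReal.ofReal (Real.exp (-(n : ℝ) * klBin ((τ : ℝ) / n) p)) :=
  binomial_upper_tail_general n p hp hp1 τ hτ1 hτ2
end

section
/- Let (Ω, 𝓕, μ) be a probability space with a filtration 𝓕₀ ⊆ 𝓕₁ ⊆ … ⊆ 𝓕ₙ, and let I₁, …, Iₙ be {0,1}-valued random variables with each Iᵢ 𝓕ᵢ-measurable, satisfying E[Iᵢ ∣ 𝓕_{i-1}] ≤ 1/2 almost surely for every i (the per-round distance-fraud bound). Let S = Σ_{i=1}^n Iᵢ. Then for every integer τ with n/2 < τ ≤ n, μ(S ≥ τ) ≤ exp(−n · D(τ/n ‖ 1/2)). -/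
/-!
Put `u = τ / n` and let `W = ∏ᵢ (α + (β - α) Iᵢ)` be the likelihood ratio of `n` independent
`Bernoulli(u)` rounds against `Bernoulli(p)` rounds, with `α = (1 - u) / (1 - p)` and `β = u / p`
(here `p = 1/2`). Each factor is bounded and has conditional mean at most `α + (β - α) p = 1`
given the past, so pulling out the known part and using the tower property gives `E W ≤ 1`.
Since `α ≤ 1 ≤ β`, on `{S ≥ τ}` we have `W ≥ β ^ τ α ^ (n - τ) = exp (n D(u ‖ p))`,
and Markov's inequality concludes.
-/

open MeasureTheory Real

open Finset

lemma pow_mul_pow_sub_le_pow_mul_pow_sub {α β : ℝ} (hα : 0 ≤ α) (hαβ : α ≤ β) {t k n : ℕ}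
    (htk : t ≤ k) (hkn : k ≤ n) : β ^ t * α ^ (n - t) ≤ β ^ k * α ^ (n - k) := by
  obtain ⟨d, rfl⟩ := Nat.exists_eq_add_of_le htk
  have hβ : 0 ≤ β := hα.trans hαβ
  rw [show n - t = d + (n - (t + d)) by omega, pow_add, pow_add, ← mul_assoc]
  gcongr

section Binary

variable {ι : Type*} {s : Finset ι} {x : ι → ℝ}

lemma sum_eq_card_filter_of_binary (hx : ∀ i ∈ s, x i = 0 ∨ x i = 1) :
    ∑ i ∈ s, x i = #{i ∈ s | x i = 1} := by
  rw [← sum_boole]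
  refine sum_congr rfl fun i hi => ?_
  rcases hx i hi with h | h <;> simp [h]

lemma prod_const_add_mul_of_binary (hx : ∀ i ∈ s, x i = 0 ∨ x i = 1) (α β : ℝ) :
    ∏ i ∈ s, (α + (β - α) * x i) = β ^ #{i ∈ s | x i = 1} * α ^ (#s - #{i ∈ s | x i = 1}) := by
  rw [← card_filter_add_card_filter_not (fun i => x i = 1) (s := s), Nat.add_sub_cancel_left,
    ← prod_const, ← prod_const, ← prod_ite]
  refine prod_congr rfl fun i hi => ?_
  rcases hx i hi with h | h <;> simp [h]

lemma pow_mul_pow_sub_le_prod_of_binary (hx : ∀ i ∈ s, x i = 0 ∨ x i = 1) {α β : ℝ}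
    (hα : 0 ≤ α) (hαβ : α ≤ β) {t : ℕ} (ht : (t : ℝ) ≤ ∑ i ∈ s, x i) :
    β ^ t * α ^ (#s - t) ≤ ∏ i ∈ s, (α + (β - α) * x i) := by
  rw [sum_eq_card_filter_of_binary hx, Nat.cast_le] at ht
  rw [prod_const_add_mul_of_binary hx]
  exact pow_mul_pow_sub_le_pow_mul_pow_sub hα hαβ ht (card_filter_le _ _)

end Binary

lemma exp_mul_klBin {p : ℝ} (hp0 : 0 < p) (hp1 : p < 1) {n t : ℕ} (ht : 0 < t) (htn : t ≤ n) :
    exp (n * klBin (t / n) p) = (t / n / p) ^ t * ((1 - t / n) / (1 - p)) ^ (n - t) := by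
  have hn : (0 : ℝ) < n := by exact_mod_cast ht.trans_le htn
  have hnu : n * (t / n : ℝ) = t := mul_div_cancel₀ _ hn.ne'
  set u : ℝ := t / n
  have hsplit : n * klBin u p = t * log (u / p) + ((n - t : ℕ) : ℝ) * log ((1 - u) / (1 - p)) := by
    rw [Nat.cast_sub htn, ← hnu]
    unfold klBin
    ring
  rw [hsplit, exp_add, exp_nat_mul, exp_log (by positivity), exp_nat_mul]
  rcases htn.eq_or_lt with rfl | hlt
  · simp
  · have : u < 1 := (div_lt_one hn).mpr (by exact_mod_cast hlt)
    rw [exp_log (div_pos (by linarith) (by linarith))]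

section

variable {Ω : Type*} {m0 : MeasurableSpace Ω} {μ : Measure Ω}

lemma condExp_const_add_mul [IsFiniteMeasure μ] {m : MeasurableSpace Ω} (hm : m ≤ m0)
    {f : Ω → ℝ} (hf : Integrable f μ) (a b : ℝ) :
    μ[fun ω => a + b * f ω | m] =ᵐ[μ] fun ω => a + b * μ[f | m] ω := by
  have hadd := condExp_add (integrable_const a) (hf.const_mul b) m
  have hsmul := condExp_smul (μ := μ) b f m
  filter_upwards [hadd, hsmul] with ω h₁ h₂
  simp only [Pi.add_apply, condExp_const hm, Pi.smul_apply, smul_eq_mul] at h₁ h₂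
  rw [← h₂]
  exact h₁

lemma stronglyMeasurable_prod_Icc (𝓕 : Filtration ℕ m0) {g : ℕ → Ω → ℝ} {n : ℕ}
    (hg : ∀ i ∈ Icc 1 n, StronglyMeasurable[𝓕 i] (g i)) :
    StronglyMeasurable[𝓕 n] fun ω => ∏ i ∈ Icc 1 n, g i ω :=
  Finset.stronglyMeasurable_fun_prod _ fun i hi =>
    (hg i hi).mono (𝓕.mono (mem_Icc.mp hi).2)

lemma integrable_prod_of_nonneg_of_le [IsFiniteMeasure μ] {ι : Type*} {s : Finset ι}
    {g : ι → Ω → ℝ} {C : ℝ} (hmeas : ∀ i ∈ s, AEStronglyMeasurable (g i) μ)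
    (hg0 : ∀ i ∈ s, ∀ ω, 0 ≤ g i ω) (hgC : ∀ i ∈ s, ∀ ω, g i ω ≤ C) :
    Integrable (fun ω => ∏ i ∈ s, g i ω) μ := by
  refine .of_bound (Finset.aestronglyMeasurable_fun_prod s hmeas) (C ^ #s) (ae_of_all _ fun ω => ?_)
  rw [Real.norm_of_nonneg (prod_nonneg fun i hi => hg0 i hi ω), ← prod_const]
  exact prod_le_prod (fun i hi => hg0 i hi ω) fun i hi => hgC i hi ω

theorem integral_prod_le_pow_of_condExp_le [IsProbabilityMeasure μ] (𝓕 : Filtration ℕ m0)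
    {g : ℕ → Ω → ℝ} {C c : ℝ} (hc : 0 ≤ c) (n : ℕ)
    (hg0 : ∀ i ∈ Icc 1 n, ∀ ω, 0 ≤ g i ω) (hgC : ∀ i ∈ Icc 1 n, ∀ ω, g i ω ≤ C)
    (hmeas : ∀ i ∈ Icc 1 n, StronglyMeasurable[𝓕 i] (g i))
    (hcond : ∀ i ∈ Icc 1 n, ∀ᵐ ω ∂μ, μ[g i | 𝓕 (i - 1)] ω ≤ c) :
    ∫ ω, ∏ i ∈ Icc 1 n, g i ω ∂μ ≤ c ^ n := by
  induction n with
  | zero => simp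
  | succ k ih =>
    have hsub : Icc 1 k ⊆ Icc 1 (k + 1) := Icc_subset_Icc_right k.le_succ
    have hk : k + 1 ∈ Icc 1 (k + 1) := by simp
    set P : Ω → ℝ := fun ω => ∏ i ∈ Icc 1 k, g i ω
    have hPmeas : StronglyMeasurable[𝓕 k] P :=
      stronglyMeasurable_prod_Icc 𝓕 fun i hi => hmeas i (hsub hi)
    have hint : ∀ {s}, s ⊆ Icc 1 (k + 1) → Integrable (fun ω => ∏ i ∈ s, g i ω) μ :=
      fun hs => integrable_prod_of_nonneg_of_le
        (fun i hi => ((hmeas i (hs hi)).mono (𝓕.le i)).aestronglyMeasurable)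
        (fun i hi => hg0 i (hs hi)) fun i hi => hgC i (hs hi)
    have hPg : (fun ω => ∏ i ∈ Icc 1 (k + 1), g i ω) = P * g (k + 1) := by
      ext ω
      exact prod_Icc_succ_top (by omega) _
    have hpull : μ[P * g (k + 1) | 𝓕 k] =ᵐ[μ] P * μ[g (k + 1) | 𝓕 k] :=
      condExp_mul_of_stronglyMeasurable_left hPmeas (hPg ▸ hint subset_rfl)
        (by simpa using hint (singleton_subset_iff.mpr hk))
    calc ∫ ω, ∏ i ∈ Icc 1 (k + 1), g i ω ∂μ = ∫ ω, (μ[P * g (k + 1) | 𝓕 k]) ω ∂μ := by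
          rw [hPg, integral_condExp (𝓕.le k)]
      _ ≤ ∫ ω, P ω * c ∂μ := by
          refine integral_mono_ae integrable_condExp ((hint hsub).mul_const c) ?_
          filter_upwards [hpull, hcond (k + 1) hk] with ω h₁ h₂
          rw [h₁]
          exact mul_le_mul_of_nonneg_left h₂ (prod_nonneg fun i hi => hg0 i (hsub hi) ω)
      _ ≤ c ^ k * c := by
          rw [integral_mul_const]
          exact mul_le_mul_of_nonneg_right (ih (fun i hi => hg0 i (hsub hi))
            (fun i hi => hgC i (hsub hi)) (fun i hi => hmeas i (hsub hi))
            fun i hi => hcond i (hsub hi)) hc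
      _ = c ^ (k + 1) := (pow_succ c k).symm

lemma integrable_prod_const_add_mul [IsFiniteMeasure μ] {ι : Type*} {s : Finset ι}
    {I : ι → Ω → ℝ} {a b : ℝ} (ha : 0 ≤ a) (hb : 0 ≤ b)
    (hI : ∀ i ∈ s, ∀ ω, 0 ≤ I i ω ∧ I i ω ≤ 1) (hmeas : ∀ i ∈ s, AEStronglyMeasurable (I i) μ) :
    Integrable (fun ω => ∏ i ∈ s, (a + b * I i ω)) μ :=
  integrable_prod_of_nonneg_of_le (C := a + b)
    (fun i hi => ((hmeas i hi).const_mul b).const_add a)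
    (fun i hi ω => by nlinarith [hI i hi ω]) fun i hi ω => by nlinarith [hI i hi ω]

theorem integral_prod_const_add_mul_le [IsProbabilityMeasure μ] (𝓕 : Filtration ℕ m0)
    {I : ℕ → Ω → ℝ} {a b p : ℝ} (ha : 0 ≤ a) (hb : 0 ≤ b) (hp : 0 ≤ p) (n : ℕ)
    (hI : ∀ i ∈ Icc 1 n, ∀ ω, 0 ≤ I i ω ∧ I i ω ≤ 1)
    (hmeas : ∀ i ∈ Icc 1 n, Measurable[𝓕 i] (I i))
    (hcond : ∀ i ∈ Icc 1 n, ∀ᵐ ω ∂μ, μ[I i | 𝓕 (i - 1)] ω ≤ p) :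
    ∫ ω, ∏ i ∈ Icc 1 n, (a + b * I i ω) ∂μ ≤ (a + b * p) ^ n := by
  refine integral_prod_le_pow_of_condExp_le 𝓕 (C := a + b) (by positivity) n
    (fun i hi ω => by nlinarith [hI i hi ω]) (fun i hi ω => by nlinarith [hI i hi ω])
    (fun i hi => (((hmeas i hi).const_mul b).const_add a).stronglyMeasurable) fun i hi => ?_
  have hIint : Integrable (I i) μ :=
    .of_bound ((hmeas i hi).mono (𝓕.le i) le_rfl).aestronglyMeasurable 1
      (ae_of_all _ fun ω => by rw [Real.norm_of_nonneg (hI i hi ω).1]; exact (hI i hi ω).2)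
  filter_upwards [condExp_const_add_mul (𝓕.le (i - 1)) hIint a b, hcond i hi] with ω h₁ h₂
  rw [h₁]
  gcongr

lemma measure_ge_le_ofReal_integral_div [IsFiniteMeasure μ] {f : Ω → ℝ} (hf0 : 0 ≤ᵐ[μ] f)
    (hf : Integrable f μ) {ε : ℝ} (hε : 0 < ε) :
    μ {ω | ε ≤ f ω} ≤ ENNReal.ofReal ((∫ ω, f ω ∂μ) / ε) := by
  rw [← ofReal_measureReal]
  exact ENNReal.ofReal_le_ofReal <|
    (le_div_iff₀' hε).mpr (mul_meas_ge_le_integral_of_nonneg hf0 hf ε)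

theorem measure_sum_ge_le_exp_neg_mul_klBin [IsProbabilityMeasure μ] (𝓕 : Filtration ℕ m0)
    {I : ℕ → Ω → ℝ} {p : ℝ} (hp0 : 0 < p) (hp1 : p < 1) (n : ℕ)
    (hbin : ∀ i ∈ Icc 1 n, ∀ ω, I i ω = 0 ∨ I i ω = 1)
    (hmeas : ∀ i ∈ Icc 1 n, Measurable[𝓕 i] (I i))
    (hcond : ∀ i ∈ Icc 1 n, ∀ᵐ ω ∂μ, μ[I i | 𝓕 (i - 1)] ω ≤ p)
    {t : ℕ} (ht : 0 < t) (hpt : p * n ≤ t) (htn : t ≤ n) :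
    μ {ω | (t : ℝ) ≤ ∑ i ∈ Icc 1 n, I i ω} ≤ ENNReal.ofReal (exp (-n * klBin (t / n) p)) := by
  have hn : (0 : ℝ) < n := by exact_mod_cast ht.trans_le htn
  set u : ℝ := t / n
  have hpu : p ≤ u := by rwa [le_div_iff₀ hn]
  have hu1 : u ≤ 1 := div_le_one_of_le₀ (by exact_mod_cast htn) hn.le
  set α := (1 - u) / (1 - p)
  set β := u / p
  have hα : 0 ≤ α := div_nonneg (by linarith) (by linarith)
  have hαβ : α ≤ β := (div_le_one₀ (by linarith)).mpr (by linarith) |>.trans <|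
    (one_le_div₀ hp0).mpr hpu
  have hI : ∀ i ∈ Icc 1 n, ∀ ω, 0 ≤ I i ω ∧ I i ω ≤ 1 := fun i hi ω => by
    rcases hbin i hi ω with h | h <;> simp [h]
  set W : Ω → ℝ := fun ω => ∏ i ∈ Icc 1 n, (α + (β - α) * I i ω)
  have hWint : Integrable W μ := integrable_prod_const_add_mul hα (sub_nonneg.mpr hαβ) hI
    fun i hi => ((hmeas i hi).mono (𝓕.le i) le_rfl).aestronglyMeasurable
  have hmean : α + (β - α) * p = 1 := by
    have := (sub_pos.mpr hp1).ne'
    simp only [α, β]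
    field_simp
    ring
  have hW : ∫ ω, W ω ∂μ ≤ 1 := by
    simpa [hmean] using
      integral_prod_const_add_mul_le 𝓕 hα (sub_nonneg.mpr hαβ) hp0.le n hI hmeas hcond
  have hsub : {ω | (t : ℝ) ≤ ∑ i ∈ Icc 1 n, I i ω} ⊆ {ω | exp (n * klBin u p) ≤ W ω} :=
    fun ω hω => by
      have h := pow_mul_pow_sub_le_prod_of_binary (fun i hi => hbin i hi ω) hα hαβ hω
      rwa [Nat.card_Icc, add_tsub_cancel_right, ← exp_mul_klBin hp0 hp1 ht htn] at h
  calc μ {ω | (t : ℝ) ≤ ∑ i ∈ Icc 1 n, I i ω}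
      ≤ μ {ω | exp (n * klBin u p) ≤ W ω} := measure_mono hsub
    _ ≤ ENNReal.ofReal ((∫ ω, W ω ∂μ) / exp (n * klBin u p)) :=
      measure_ge_le_ofReal_integral_div (ae_of_all _ fun ω =>
        prod_nonneg fun i hi => by nlinarith [hI i hi ω]) hWint (exp_pos _)
    _ ≤ ENNReal.ofReal (exp (-n * klBin u p)) := by
      rw [neg_mul, exp_neg, ← one_div]
      gcongr

end

/-- **Distance-fraud multi-round bound.**  If each round's acceptance indicator `Iᵢ` is
`{0,1}`-valued, `𝓕ᵢ`-measurable, and satisfies `E[Iᵢ ∣ 𝓕_{i-1}] ≤ 1/2` a.s. (the per-round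
distance-fraud bound), then for every integer `τ` with `n/2 < τ ≤ n`,
`μ(S ≥ τ) ≤ exp(−n · D(τ/n ‖ 1/2))` where `S` is the number of accepted rounds. -/
theorem distance_fraud_multi_round
    {Ω : Type*} {m0 : MeasurableSpace Ω} {μ : Measure Ω} [IsProbabilityMeasure μ]
    (n : ℕ) (𝓕 : Filtration ℕ m0) (I : ℕ → Ω → ℝ)
    (hbin : ∀ i ∈ Finset.Icc 1 n, ∀ ω, I i ω = 0 ∨ I i ω = 1)
    (hmeas : ∀ i ∈ Finset.Icc 1 n, Measurable[𝓕 i] (I i))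
    (hcond : ∀ i ∈ Finset.Icc 1 n, ∀ᵐ ω ∂μ, (μ[I i | 𝓕 (i - 1)]) ω ≤ 1 / 2)
    (τ : ℤ) (hτ1 : (n : ℝ) / 2 < τ) (hτ2 : (τ : ℝ) ≤ n) :
    μ {ω | (τ : ℝ) ≤ ∑ i ∈ Finset.Icc 1 n, I i ω}
      ≤ ENNReal.ofReal (Real.exp (-(n : ℝ) * klBin ((τ : ℝ) / n) (1 / 2))) := by
  lift τ to ℕ using by exact_mod_cast (by positivity : (0 : ℝ) ≤ n / 2).trans hτ1.le
  push_cast at hτ1 hτ2 ⊢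
  exact measure_sum_ge_le_exp_neg_mul_klBin 𝓕 (by norm_num) (by norm_num) n hbin hmeas hcond
    (by exact_mod_cast (by positivity : (0 : ℝ) ≤ n / 2).trans_lt hτ1) (by linarith)
    (by exact_mod_cast hτ2)
end
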